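/- The commutative reduction relation of Q* is strongly normalizing: there is no infinite sequence of terms M₁ →_K M₂ →_K M₃ →_K ⋯ where each step is a left-commutation L((λπ.M)N) → (λπ.LM)N or right-commutation ((λπ.M)N)L → (λπ.ML)N rewrite (applied in any surface context). -/

import Mathlib

/-- Patterns of the quantum lambda calculus Q*: a classical variable, a tuple of
classical variables (represented here by pairs), or a banged variable. -/
inductive Pat where
  | pvar : ℕ → Pat
  | ptuple : ℕ → ℕ → Pat
  | pbang : ℕ → Pat
deriving DecidableEq

/-- Terms of the quantum lambda calculus Q*. -/
inductive Tm where
  | cvar : ℕ → Tm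
  | qvar : ℕ → Tm
  | bang : Tm → Tm
  | bconst : Bool → Tm
  | uop : ℕ → Tm
  | new : Tm → Tm
  | app : Tm → Tm → Tm
  | meas : Tm → Tm
  | ite : Tm → Tm → Tm → Tm
  | pair : Tm → Tm → Tm
  | lam : Pat → Tm → Tm
deriving DecidableEq

/-- The commutative reduction rules `K = {l.cm, r.cm}` of Q*, closed under all
surface contexts (not under `!`, and not in the branches of `if`). -/
inductive KStep : Tm → Tm → Prop where
  | lcm (L : Tm) (p : Pat) (M N : Tm) :
      KStep (.app L (.app (.lam p M) N)) (.app (.lam p (.app L M)) N)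
  | rcm (L : Tm) (p : Pat) (M N : Tm) :
      KStep (.app (.app (.lam p M) N) L) (.app (.lam p (.app M L)) N)
  | appL {M M' : Tm} (N : Tm) : KStep M M' → KStep (.app M N) (.app M' N)
  | appR {N N' : Tm} (M : Tm) : KStep N N' → KStep (.app M N) (.app M N')
  | pairL {M M' : Tm} (N : Tm) : KStep M M' → KStep (.pair M N) (.pair M' N)
  | pairR {N N' : Tm} (M : Tm) : KStep N N' → KStep (.pair M N) (.pair M N')
  | inNew {M M' : Tm} : KStep M M' → KStep (.new M) (.new M')
  | inMeas {M M' : Tm} : KStep M M' → KStep (.meas M) (.meas M')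
  | inIf {M M' : Tm} (N L : Tm) : KStep M M' → KStep (.ite M N L) (.ite M' N L)
  | inLam {M M' : Tm} (p : Pat) : KStep M M' → KStep (.lam p M) (.lam p M')

/-!
Interpret terms in `ℕ` by a polynomial interpretation in which application is multiplication,
abstraction is `+ 1`, and every atom weighs `2`, so that every term weighs at least `2`.
Then `l.cm` sends `L · ((M + 1) · N) = L·M·N + L·N` to `(L·M + 1) · N = L·M·N + N`, which is
smaller because `L ≥ 2`, and symmetrically for `r.cm`. All surface contexts are strictly
monotone in the hole, while `!` and the branches of `if` are not surface contexts and may be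
interpreted by constants. A `K`-sequence therefore strictly decreases a natural number.
-/

namespace Tm

def weight : Tm → ℕ
  | cvar _ | qvar _ | bang _ | bconst _ | uop _ => 2
  | new M | meas M | ite M _ _ | lam _ M => M.weight + 1
  | app M N => M.weight * N.weight
  | pair M N => M.weight + N.weight

theorem two_le_weight : ∀ M : Tm, 2 ≤ M.weight
  | cvar _ | qvar _ | bang _ | bconst _ | uop _ => le_rfl
  | new M | meas M | ite M _ _ | lam _ M => (two_le_weight M).trans (Nat.le_succ _)
  | app M N => by
    have := two_le_weight M; have := two_le_weight N
    simp only [weight]; nlinarith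
  | pair M N => by have := two_le_weight M; simp only [weight]; omega

end Tm

theorem KStep.weight_lt {M M' : Tm} (h : KStep M M') : M'.weight < M.weight := by
  induction h with
  | lcm L p M N | rcm L p M N =>
    have := L.two_le_weight; have := N.two_le_weight
    simp only [Tm.weight]; nlinarith
  | appL N _ ih => exact Nat.mul_lt_mul_of_pos_right ih (by linarith [N.two_le_weight])
  | appR M _ ih => exact Nat.mul_lt_mul_of_pos_left ih (by linarith [M.two_le_weight])
  | pairL _ _ ih | pairR _ _ ih | inNew _ ih | inMeas _ ih | inIf _ _ _ ih | inLam _ _ ih =>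
    simp only [Tm.weight]; omega

/-- The commutative reduction relation of Q* is strongly normalizing. -/
theorem kstep_strongly_normalizing :
    ¬ ∃ f : ℕ → Tm, ∀ n : ℕ, KStep (f n) (f (n + 1)) := by
  rintro ⟨f, hf⟩
  exact not_strictAnti_of_wellFoundedLT (fun n ↦ (f n).weight)
    (strictAnti_nat_of_succ_lt fun n ↦ (hf n).weight_lt)
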